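/- Let C be a finite prefix-free set of binary strings (no string in C is a proper prefix of another). Then the sum over w ∈ C of 2^(−length(w)/2) is at most √|C|. -/
import Mathlib

lemma kraft_ineq (C : Finset (List Bool))
    (hpf : ∀ u ∈ C, ∀ v ∈ C, u ≠ v → ¬ u <+: v) :
    ∑ w ∈ C, (2 : ℝ) ^ (-(w.length : ℝ)) ≤ 1 := by
  set N := C.sup (·.length) with hN
  have hle : ∀ w ∈ C, w.length ≤ N := fun w hw => Finset.le_sup (f := (·.length)) hw
  clear_value N
  clear hN
  set S : List Bool → Finset (List Bool) :=
    fun w => Finset.univ.image (fun t : Fin (N - w.length) → Bool => w ++ List.ofFn t) with hS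
  have hcard : ∀ w, (S w).card = 2 ^ (N - w.length) := by
    intro w
    rw [hS, Finset.card_image_of_injective _
      (fun a b h => List.ofFn_injective (List.append_cancel_left h))]
    simp [Finset.card_univ]
  have hmem : ∀ w x, x ∈ S w → w <+: x ∧ x.length = N - w.length + w.length := by
    intro w x hx
    simp only [hS, Finset.mem_image, Finset.mem_univ, true_and] at hx
    obtain ⟨t, rfl⟩ := hx
    exact ⟨⟨List.ofFn t, rfl⟩, by simp [Nat.add_comm]⟩
  have hdisj : ∀ u ∈ C, ∀ v ∈ C, u ≠ v → Disjoint (S u) (S v) := by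
    intro u hu v hv huv
    rw [Finset.disjoint_left]
    intro x hxu hxv
    obtain ⟨hpu, _⟩ := hmem u x hxu
    obtain ⟨hpv, _⟩ := hmem v x hxv
    rcases (List.prefix_or_prefix_of_prefix hpu hpv) with h | h
    · exact hpf u hu v hv huv h
    · exact hpf v hv u hu huv.symm h
  have hsub : C.biUnion S ⊆ Finset.univ.image (fun t : Fin N → Bool => List.ofFn t) := by
    intro x hx
    rw [Finset.mem_biUnion] at hx
    obtain ⟨w, hw, hxw⟩ := hx
    obtain ⟨_, hlen⟩ := hmem w x hxw
    rw [Nat.sub_add_cancel (hle w hw)] at hlen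
    simp only [Finset.mem_image, Finset.mem_univ, true_and]
    subst hlen
    exact ⟨x.get, List.ofFn_get x⟩
  have hnat : ∑ w ∈ C, 2 ^ (N - w.length) ≤ 2 ^ N := by
    calc ∑ w ∈ C, 2 ^ (N - w.length) = ∑ w ∈ C, (S w).card :=
          Finset.sum_congr rfl fun w _ => (hcard w).symm
      _ = (C.biUnion S).card := (Finset.card_biUnion hdisj).symm
      _ ≤ (Finset.univ.image (fun t : Fin N → Bool => List.ofFn t)).card :=
          Finset.card_le_card hsub
      _ ≤ 2 ^ N := by
          refine le_trans Finset.card_image_le ?_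
          simp [Finset.card_univ]
  have hterm : ∀ w ∈ C, (2 : ℝ) ^ (-(w.length : ℝ)) = (2 : ℝ) ^ (N - w.length) / 2 ^ N := by
    intro w hw
    rw [Real.rpow_neg (by norm_num), Real.rpow_natCast,
      pow_sub₀ (2 : ℝ) (by norm_num) (hle w hw)]
    field_simp
  calc ∑ w ∈ C, (2 : ℝ) ^ (-(w.length : ℝ))
      = (∑ w ∈ C, (2 : ℝ) ^ (N - w.length)) / 2 ^ N := by
        rw [Finset.sum_div]; exact Finset.sum_congr rfl hterm
    _ ≤ (2 : ℝ) ^ N / 2 ^ N := by gcongr; exact_mod_cast hnat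
    _ = 1 := by field_simp

/-- For a finite prefix-free set `C` of binary strings,
`∑_{w ∈ C} 2^{-|w|/2} ≤ √|C|` (Cauchy–Schwarz combined with Kraft's inequality). -/
theorem kraft_cauchy_schwarz (C : Finset (List Bool))
    (hpf : ∀ u ∈ C, ∀ v ∈ C, u ≠ v → ¬ u <+: v) :
    ∑ w ∈ C, (2 : ℝ) ^ (-(w.length : ℝ) / 2) ≤ Real.sqrt C.card := by
  have hk := kraft_ineq C hpf
  have hnn : (0:ℝ) ≤ ∑ w ∈ C, (2 : ℝ) ^ (-(w.length : ℝ) / 2) :=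
    Finset.sum_nonneg fun w _ => by positivity
  refine (Real.le_sqrt hnn (by positivity)).mpr ?_
  calc (∑ w ∈ C, (2:ℝ)^(-(w.length:ℝ)/2))^2
      = (∑ w ∈ C, 1 * (2:ℝ)^(-(w.length:ℝ)/2))^2 := by simp
    _ ≤ (∑ w ∈ C, (1:ℝ)^2) * ∑ w ∈ C, ((2:ℝ)^(-(w.length:ℝ)/2))^2 :=
        Finset.sum_mul_sq_le_sq_mul_sq C _ _
    _ = C.card * ∑ w ∈ C, (2:ℝ)^(-(w.length:ℝ)) := by
        congr 1
        · simp
        · refine Finset.sum_congr rfl fun w _ => ?_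
          rw [← Real.rpow_natCast ((2:ℝ)^(-(w.length:ℝ)/2)) 2,
            ← Real.rpow_mul (by norm_num)]
          norm_num
    _ ≤ C.card * 1 := mul_le_mul_of_nonneg_left hk (by positivity)
    _ = C.card := mul_one _
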